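/- Let a ∈ S_{k,ℓ} with grid function γ_a. Then the grid-valuation matrix V_a = (v_{ij}) defined by v_{ij} = a_{γ_a^{-1}(ℓ+1-i, j)} is a standard Young tableau of rectangular shape ℓ×k: its entries are {1,...,kℓ} and each row and column is increasing. -/

import Mathlib

/-- Length of the longest decreasing subsequence of `a` ending at the `t`-th
entry (1-based) of `a`. -/
noncomputable def gridI (a : List ℕ) (t : ℕ) : ℕ :=
  sSup {r | ∃ s : List ℕ, s.Sublist (a.take t) ∧ s.length = r ∧
    s.getLast? = a[t-1]? ∧ s.Pairwise (· > ·)}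

/-- Length of the longest increasing subsequence of `a` ending at the `t`-th
entry (1-based) of `a`. -/
noncomputable def gridJ (a : List ℕ) (t : ℕ) : ℕ :=
  sSup {r | ∃ s : List ℕ, s.Sublist (a.take t) ∧ s.length = r ∧
    s.getLast? = a[t-1]? ∧ s.Pairwise (· < ·)}

/-- `M`, restricted to `{1,…,ℓ} × {1,…,k}`, is a standard Young tableau of
rectangular shape `ℓ × k`: its entries are exactly `{1,…,kℓ}` and every row
and every column is strictly increasing. -/
def IsSYT (ℓ k : ℕ) (M : ℕ → ℕ → ℕ) : Prop :=
  Set.BijOn (fun p : ℕ × ℕ => M p.1 p.2)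
    (↑(Finset.Icc 1 ℓ ×ˢ Finset.Icc 1 k) : Set (ℕ × ℕ))
    (↑(Finset.Icc 1 (k*ℓ)) : Set ℕ) ∧
  (∀ i ∈ Finset.Icc 1 ℓ, ∀ j ∈ Finset.Icc 1 k, ∀ j' ∈ Finset.Icc 1 k,
    j < j' → M i j < M i j') ∧
  (∀ i ∈ Finset.Icc 1 ℓ, ∀ i' ∈ Finset.Icc 1 ℓ, ∀ j ∈ Finset.Icc 1 k,
    i < i' → M i j < M i' j)

/-!
Appending `a_{t'}` to a longest decreasing (resp. increasing) subsequence ending at `a_t`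
shows that for positions `t < t'` of a list without repetitions, the second coordinate of `γ_a`
grows from `t` to `t'` if `a_t < a_{t'}`, and the first one grows if `a_t > a_{t'}`. Hence, of two
positions with the same first coordinate, the one with the larger second coordinate carries the
larger entry, and of two with the same second coordinate, the one with the larger first
coordinate carries the smaller entry; through `i ↦ ℓ + 1 - i` these are the row and column
conditions. Distinct cells have distinct positions, so the valuation is injective, and it hits
all `kℓ` values since the box has `kℓ` cells.
-/

/-- `gridI a t` and `gridJ a t` are the suprema of this set for `(· > ·)` and `(· < ·)`. -/
def chainLengthsEndingAt (R : ℕ → ℕ → Prop) (a : List ℕ) (t : ℕ) : Set ℕ :=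
  {r | ∃ s : List ℕ, s.Sublist (a.take t) ∧ s.length = r ∧
    s.getLast? = a[t-1]? ∧ s.Pairwise R}

namespace List

variable {a : List ℕ} {t t' : ℕ}

theorem getElem?_pred_eq_getD (h1 : 1 ≤ t) (h2 : t ≤ a.length) :
    a[t-1]? = some (a.getD (t-1) 0) := by
  rw [getD_eq_getElem _ _ (by omega), getElem?_eq_getElem]

theorem take_eq_take_pred_append_getD (h1 : 1 ≤ t) (h2 : t ≤ a.length) :
    a.take t = a.take (t-1) ++ [a.getD (t-1) 0] := by
  rw [getD_eq_getElem _ _ (by omega), take_append_getElem, Nat.sub_add_cancel h1]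

theorem Nodup.eq_of_getD_pred_eq (ha : a.Nodup) (h1 : 1 ≤ t) (h2 : t ≤ a.length)
    (h1' : 1 ≤ t') (h2' : t' ≤ a.length) (h : a.getD (t-1) 0 = a.getD (t'-1) 0) : t = t' := by
  rw [getD_eq_getElem _ _ (by omega), getD_eq_getElem _ _ (by omega), ha.getElem_inj_iff] at h
  omega

theorem Perm.getD_pred_mem_Icc {n : ℕ} (ha : a.Perm (range' 1 n)) (h1 : 1 ≤ t) (h2 : t ≤ n) :
    a.getD (t-1) 0 ∈ Finset.Icc 1 n := by
  have hmem : a.getD (t-1) 0 ∈ a := by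
    rw [getD_eq_getElem _ _ (by rw [ha.length_eq, length_range']; omega)]
    exact getElem_mem _
  have := mem_range'_1.1 (ha.mem_iff.1 hmem)
  rw [Finset.mem_Icc]
  omega

theorem Perm.bijOn_getD_pred_comp {α : Type*} {n : ℕ} {s : Finset α} {pos : α → ℕ}
    (ha : a.Perm (range' 1 n)) (hmaps : Set.MapsTo pos s (Finset.Icc 1 n))
    (hinj : Set.InjOn pos s) (hcard : n ≤ s.card) :
    Set.BijOn (fun x => a.getD (pos x - 1) 0) s (Finset.Icc 1 n) := by
  have hlen : a.length = n := by simpa using ha.length_eq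
  have hmaps' : Set.MapsTo (fun x => a.getD (pos x - 1) 0) s (Finset.Icc 1 n) := fun x hx => by
    obtain ⟨h1, h2⟩ := Finset.mem_Icc.1 (hmaps hx)
    exact ha.getD_pred_mem_Icc h1 h2
  have hinj' : Set.InjOn (fun x => a.getD (pos x - 1) 0) s := fun x hx y hy hxy => by
    obtain ⟨h1, h2⟩ := Finset.mem_Icc.1 (hmaps hx)
    obtain ⟨h1', h2'⟩ := Finset.mem_Icc.1 (hmaps hy)
    exact hinj hx hy ((ha.nodup_iff.2 nodup_range').eq_of_getD_pred_eq h1 (by omega) h1'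
      (by omega) hxy)
  exact ⟨hmaps', hinj', Finset.surjOn_of_injOn_of_card_le _ hmaps' hinj' (by simpa using hcard)⟩

end List

section Chains

variable {R : ℕ → ℕ → Prop} {a : List ℕ} {t t' : ℕ}

theorem one_mem_chainLengthsEndingAt (h1 : 1 ≤ t) (h2 : t ≤ a.length) :
    1 ∈ chainLengthsEndingAt R a t := by
  refine ⟨[a.getD (t-1) 0], ?_, rfl, (List.getElem?_pred_eq_getD h1 h2).symm,
    List.pairwise_singleton _ _⟩
  rw [List.singleton_sublist, List.take_eq_take_pred_append_getD h1 h2]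
  exact List.mem_append_right _ (List.mem_singleton_self _)

theorem bddAbove_chainLengthsEndingAt : BddAbove (chainLengthsEndingAt R a t) := by
  refine ⟨t, fun x ⟨s, hsub, hlen, _⟩ => ?_⟩
  calc x = s.length := hlen.symm
    _ ≤ (a.take t).length := hsub.length_le
    _ ≤ t := List.length_take_le _ _

theorem sSup_chainLengthsEndingAt_lt [IsTrans ℕ R] (h1 : 1 ≤ t) (htt' : t < t')
    (h2 : t' ≤ a.length) (hrel : R (a.getD (t-1) 0) (a.getD (t'-1) 0)) :
    sSup (chainLengthsEndingAt R a t) < sSup (chainLengthsEndingAt R a t') := by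
  obtain ⟨s, hsub, hlen, hlast, hchain⟩ :=
    Nat.sSup_mem ⟨1, one_mem_chainLengthsEndingAt (R := R) (a := a) h1 (by omega)⟩
      bddAbove_chainLengthsEndingAt
  rw [List.getElem?_pred_eq_getD h1 (by omega), List.getLast?_eq_some_iff] at hlast
  obtain ⟨ys, rfl⟩ := hlast
  have hextend : ∀ b ∈ ys ++ [a.getD (t-1) 0], R b (a.getD (t'-1) 0) := by
    intro b hb
    rcases List.mem_append.1 hb with hb | hb
    · exact _root_.trans ((List.pairwise_append.1 hchain).2.2 b hb _ (List.mem_singleton_self _))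
        hrel
    · rwa [List.mem_singleton.1 hb]
  have hmem : sSup (chainLengthsEndingAt R a t) + 1 ∈ chainLengthsEndingAt R a t' := by
    refine ⟨ys ++ [a.getD (t-1) 0] ++ [a.getD (t'-1) 0], ?_, by simp [← hlen], ?_, ?_⟩
    · rw [List.take_eq_take_pred_append_getD (by omega) h2]
      exact (hsub.trans (List.take_sublist_take_left (by omega))).append (List.Sublist.refl _)
    · rw [List.getLast?_concat, List.getElem?_pred_eq_getD (by omega) h2]
    · exact List.pairwise_append.2 ⟨hchain, List.pairwise_singleton _ _,
        fun b hb c hc => List.mem_singleton.1 hc ▸ hextend b hb⟩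
  have := le_csSup bddAbove_chainLengthsEndingAt hmem
  omega

end Chains

namespace List.Nodup

variable {a : List ℕ} {t t' : ℕ}

theorem grid_lt_of_lt (ha : a.Nodup) (h1 : 1 ≤ t) (htt' : t < t') (h2 : t' ≤ a.length) :
    (a.getD (t-1) 0 < a.getD (t'-1) 0 ∧ gridJ a t < gridJ a t') ∨
      (a.getD (t'-1) 0 < a.getD (t-1) 0 ∧ gridI a t < gridI a t') := by
  rcases lt_or_gt_of_ne fun h => htt'.ne (ha.eq_of_getD_pred_eq h1 (by omega) (by omega) h2 h)
    with h | h
  · exact .inl ⟨h, sSup_chainLengthsEndingAt_lt (R := (· < ·)) h1 htt' h2 h⟩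
  · exact .inr ⟨h, sSup_chainLengthsEndingAt_lt (R := (· > ·)) h1 htt' h2 h⟩

theorem getD_pred_lt_of_gridI_eq_of_gridJ_lt (ha : a.Nodup) (h1 : 1 ≤ t)
    (h2 : t ≤ a.length) (h1' : 1 ≤ t') (h2' : t' ≤ a.length) (hI : gridI a t = gridI a t')
    (hJ : gridJ a t < gridJ a t') : a.getD (t-1) 0 < a.getD (t'-1) 0 := by
  rcases lt_trichotomy t t' with h | rfl | h
  · have := ha.grid_lt_of_lt h1 h h2'; omega
  · omega
  · have := ha.grid_lt_of_lt h1' h h2; omega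

theorem getD_pred_lt_of_gridJ_eq_of_gridI_lt (ha : a.Nodup) (h1 : 1 ≤ t)
    (h2 : t ≤ a.length) (h1' : 1 ≤ t') (h2' : t' ≤ a.length) (hJ : gridJ a t = gridJ a t')
    (hI : gridI a t' < gridI a t) : a.getD (t-1) 0 < a.getD (t'-1) 0 := by
  rcases lt_trichotomy t t' with h | rfl | h
  · have := ha.grid_lt_of_lt h1 h h2'; omega
  · omega
  · have := ha.grid_lt_of_lt h1' h h2; omega

end List.Nodup

theorem grid_valuation_is_SYT_general (k ℓ : ℕ) (a : List ℕ)
    (hperm : a.Perm (List.range' 1 (k*ℓ)))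
    (r : ℕ → ℕ → ℕ)
    (hr : ∀ i ∈ Finset.Icc 1 ℓ, ∀ j ∈ Finset.Icc 1 k,
      r i j ∈ Finset.Icc 1 (k*ℓ) ∧ gridI a (r i j) = i ∧ gridJ a (r i j) = j) :
    IsSYT ℓ k (fun i j => a.getD (r (ℓ+1-i) j - 1) 0) := by
  have hnodup : a.Nodup := hperm.nodup_iff.2 List.nodup_range'
  have hlen : a.length = k*ℓ := by simpa using hperm.length_eq
  have hcell : ∀ i ∈ Finset.Icc 1 ℓ, ∀ j ∈ Finset.Icc 1 k, i ≤ ℓ ∧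
      1 ≤ r (ℓ+1-i) j ∧ r (ℓ+1-i) j ≤ a.length ∧
      gridI a (r (ℓ+1-i) j) = ℓ+1-i ∧ gridJ a (r (ℓ+1-i) j) = j := by
    intro i hi j hj
    rw [Finset.mem_Icc] at hi
    obtain ⟨hmem, hI, hJ⟩ := hr (ℓ+1-i) (Finset.mem_Icc.2 (by omega)) j hj
    rw [Finset.mem_Icc] at hmem
    omega
  refine ⟨List.Perm.bijOn_getD_pred_comp hperm (fun p hp => ?_) (fun p hp q hq hpq => ?_)
    (by simp [mul_comm]), ?_, ?_⟩
  · obtain ⟨hi, hj⟩ := Finset.mem_product.1 hp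
    obtain ⟨-, h1, h2, -⟩ := hcell p.1 hi p.2 hj
    exact Finset.mem_Icc.2 ⟨h1, hlen ▸ h2⟩
  · obtain ⟨hp1, -, -, hI, hJ⟩ := hcell p.1 (Finset.mem_product.1 hp).1 p.2
      (Finset.mem_product.1 hp).2
    obtain ⟨hq1, -, -, hI', hJ'⟩ := hcell q.1 (Finset.mem_product.1 hq).1 q.2
      (Finset.mem_product.1 hq).2
    rw [hpq] at hI hJ
    exact Prod.ext (by omega) (by omega)
  · intro i hi j hj j' hj' hjj'
    obtain ⟨-, h1, h2, hI, hJ⟩ := hcell i hi j hj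
    obtain ⟨-, h1', h2', hI', hJ'⟩ := hcell i hi j' hj'
    exact hnodup.getD_pred_lt_of_gridI_eq_of_gridJ_lt h1 h2 h1' h2' (hI.trans hI'.symm) (by omega)
  · intro i hi i' hi' j hj hii'
    obtain ⟨-, h1, h2, hI, hJ⟩ := hcell i hi j hj
    obtain ⟨hi'ℓ, h1', h2', hI', hJ'⟩ := hcell i' hi' j hj
    exact hnodup.getD_pred_lt_of_gridJ_eq_of_gridI_lt h1 h2 h1' h2' (hJ.trans hJ'.symm) (by omega)

theorem grid_valuation_is_SYT (k ℓ : ℕ) (a : List ℕ)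
    (hperm : a.Perm (List.range' 1 (k*ℓ)))
    (hinc : ¬ ∃ s : List ℕ, s.Sublist a ∧ s.length = k+1 ∧ s.Pairwise (· < ·))
    (hdec : ¬ ∃ s : List ℕ, s.Sublist a ∧ s.length = ℓ+1 ∧ s.Pairwise (· > ·))
    (r : ℕ → ℕ → ℕ)
    (hr : ∀ i ∈ Finset.Icc 1 ℓ, ∀ j ∈ Finset.Icc 1 k,
      r i j ∈ Finset.Icc 1 (k*ℓ) ∧ gridI a (r i j) = i ∧ gridJ a (r i j) = j) :
    IsSYT ℓ k (fun i j => a.getD (r (ℓ+1-i) j - 1) 0) :=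
  grid_valuation_is_SYT_general k ℓ a hperm r hr
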